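/- arXiv:1705.09537 — 8 statements merged into one kernel-verified Lean document; each statement's English description precedes it below -/
import Mathlib

section
/- Let Δ be a simplicial complex of dimension d on [n]. Then Δ is shellable (in the non-pure sense of Björner–Wachs) if and only if its facet ideal I_F(Δ) has linear residuals, i.e., there exists an ordering m_1,...,m_r of the minimal squarefree monomial generators of I_F(Δ) such that for every i with 1 < i ≤ r, the set Res(I_i) = { m_i/gcd(m_k, m_i) : 1 ≤ k ≤ i−1 } is minimally generated (as a monomial set, after removing redundant divisible elements) by monomials of degree 1. -/
open Finset

/-- The set of faces of the simplicial complex generated by a set `S` of faces. -/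
def genFaces {α : Type*} (S : Set (Finset α)) : Set (Finset α) :=
  {G | ∃ F ∈ S, G ⊆ F}

/-- `G` is a facet (maximal face) of the complex whose face set is `A`. -/
def isFacetOf {α : Type*} (G : Finset α) (A : Set (Finset α)) : Prop :=
  G ∈ A ∧ ∀ H ∈ A, G ⊆ H → G = H

/-- The ordered list of facets `l` is a shelling: for each `j ≥ 1` the subcomplex
`⟨F_0,…,F_{j-1}⟩ ∩ ⟨F_j⟩` is pure of dimension `dim F_j - 1`. -/
def isShelling {α : Type*} [DecidableEq α] (l : List (Finset α)) : Prop :=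
  ∀ j, 0 < j → j < l.length →
    ∀ G, isFacetOf G (genFaces {F | ∃ k < j, F = l.getD k ∅} ∩ genFaces {l.getD j ∅}) →
      (G.card : ℤ) = (l.getD j ∅).card - 1

/-- A complex with facet set `S` is shellable if its facets admit a shelling order. -/
def Shellable {α : Type*} [DecidableEq α] (S : Set (Finset α)) : Prop :=
  ∃ l : List (Finset α), l.Nodup ∧ {F | F ∈ l} = S ∧ isShelling l

/-- The facet ideal has linear residuals w.r.t. the ordering `l`: for each `i ≥ 1`,
every residual `m_{F_i}/gcd(m_{F_i}, m_{F_k})` (whose support is `F_i \ F_k`) is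
divisible by a residual of degree 1, i.e. the minimal residuals are variables. -/
def linearResiduals {α : Type*} [DecidableEq α] (l : List (Finset α)) : Prop :=
  ∀ i, 0 < i → i < l.length → ∀ k < i,
    ∃ k' < i, (l.getD i ∅ \ l.getD k' ∅) ⊆ (l.getD i ∅ \ l.getD k ∅) ∧
      (l.getD i ∅ \ l.getD k' ∅).card = 1

lemma shelling_iff_lr {α : Type*} [DecidableEq α] (l : List (Finset α)) :
    isShelling l ↔ linearResiduals l := by
  classical
  constructor
  · intro hs i hi hil k hk
    set Fi := l.getD i ∅ with hFi
    set A : Set (Finset α) :=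
      genFaces {F | ∃ k' < i, F = l.getD k' ∅} ∩ genFaces {Fi} with hA
    have hbase : Fi ∩ (l.getD k ∅) ∈ A := by
      constructor
      · exact ⟨l.getD k ∅, ⟨k, hk, rfl⟩, inter_subset_right⟩
      · exact ⟨Fi, rfl, inter_subset_left⟩
    -- maximal element of T := {H | H ∈ A ∧ base ⊆ H}
    set base := Fi ∩ (l.getD k ∅) with hb
    set T : Finset (Finset α) :=
      Fi.powerset.filter (fun H => H ∈ A ∧ base ⊆ H) with hT
    have hbT : base ∈ T := by
      simp only [hT, mem_filter, mem_powerset]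
      exact ⟨inter_subset_left, hbase, subset_rfl⟩
    obtain ⟨G', hG'T, hmax⟩ := T.exists_max_image (fun H => H.card) ⟨base, hbT⟩
    simp only [hT, mem_filter, mem_powerset] at hG'T
    obtain ⟨hG'Fi, hG'A, hbG'⟩ := hG'T
    have hfacet : isFacetOf G' A := by
      refine ⟨hG'A, fun H hH hGH => ?_⟩
      have hHFi : H ⊆ Fi := by
        obtain ⟨F, hF, hHF⟩ := hH.2
        rwa [Set.mem_singleton_iff.mp hF] at hHF
      have hHT : H ∈ T := by
        simp only [hT, mem_filter, mem_powerset]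
        exact ⟨hHFi, hH, hbG'.trans hGH⟩
      exact eq_of_subset_of_card_le hGH (hmax H hHT)
    have hcard := hs i hi hil G' hfacet
    rw [← hFi] at hcard
    obtain ⟨F, ⟨k', hk', rfl⟩, hG'F⟩ := hG'A.1
    refine ⟨k', hk', ?_, ?_⟩
    · intro x hx
      simp only [mem_sdiff] at hx ⊢
      refine ⟨hx.1, fun hxk => ?_⟩
      have : x ∈ base := mem_inter.mpr ⟨hx.1, hxk⟩
      exact hx.2 (hG'F (hbG' this))
    · -- G' = Fi ∩ F_{k'}
      have hsub : G' ⊆ Fi ∩ l.getD k' ∅ := subset_inter hG'Fi hG'F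
      have hmem : Fi ∩ l.getD k' ∅ ∈ T := by
        simp only [hT, mem_filter, mem_powerset]
        exact ⟨inter_subset_left,
          ⟨⟨l.getD k' ∅, ⟨k', hk', rfl⟩, inter_subset_right⟩, ⟨Fi, rfl, inter_subset_left⟩⟩,
          hbG'.trans hsub⟩
      have hGeq : G' = Fi ∩ l.getD k' ∅ := eq_of_subset_of_card_le hsub (hmax _ hmem)
      have h1 : (Fi ∩ l.getD k' ∅).card + (Fi \ l.getD k' ∅).card = Fi.card :=
        card_inter_add_card_sdiff Fi (l.getD k' ∅)
      rw [← hGeq] at h1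
      have : (0:ℤ) ≤ (G'.card : ℤ) := Int.natCast_nonneg _
      omega
  · intro hlr j hj hjl G hG
    set Fj := l.getD j ∅ with hFj
    obtain ⟨⟨⟨F, ⟨k, hk, rfl⟩, hGF⟩, hGFj'⟩, hmax⟩ := hG
    have hGFj : G ⊆ Fj := by
      obtain ⟨F', hF', hGF'⟩ := hGFj'
      rwa [Set.mem_singleton_iff.mp hF'] at hGF'
    obtain ⟨k', hk', hsub, hcard⟩ := hlr j hj hjl k hk
    rw [← hFj] at hsub hcard
    have hGH : G ⊆ Fj ∩ l.getD k' ∅ := by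
      intro x hx
      refine mem_inter.mpr ⟨hGFj hx, ?_⟩
      by_contra hxk'
      have : x ∈ Fj \ l.getD k' ∅ := mem_sdiff.mpr ⟨hGFj hx, hxk'⟩
      exact (mem_sdiff.mp (hsub this)).2 (hGF hx)
    have hHA : Fj ∩ l.getD k' ∅ ∈
        (genFaces {F | ∃ k < j, F = l.getD k ∅} ∩ genFaces {Fj}) := by
      exact ⟨⟨l.getD k' ∅, ⟨k', hk', rfl⟩, inter_subset_right⟩, ⟨Fj, rfl, inter_subset_left⟩⟩
    have hGeq : G = Fj ∩ l.getD k' ∅ := hmax _ hHA hGH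
    have h1 : (Fj ∩ l.getD k' ∅).card + (Fj \ l.getD k' ∅).card = Fj.card :=
      card_inter_add_card_sdiff Fj (l.getD k' ∅)
    rw [hGeq]
    omega

/-- A simplicial complex `Δ` on `[n]` is shellable if and only if its facet ideal
`I_F(Δ)` has linear residuals for some ordering of its generators. -/
theorem shellable_iff_linearResiduals (n : ℕ) (Fs : Finset (Finset ℕ))
    (hne : Fs.Nonempty)
    (hvert : ∀ F ∈ Fs, F ⊆ Finset.range n)
    (hfacet : ∀ F ∈ Fs, ∀ G ∈ Fs, F ⊆ G → F = G) :
    Shellable (↑Fs : Set (Finset ℕ)) ↔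
      ∃ l : List (Finset ℕ), l.Nodup ∧ {F | F ∈ l} = (↑Fs : Set (Finset ℕ)) ∧
        linearResiduals l := by
  unfold Shellable
  simp only [← shelling_iff_lr]
end

section
/- Let Δ be a simplicial complex on [n] with a fixed ordering F_1,...,F_s of its facets, and suppose that for all 2 ≤ j ≤ s the subcomplex ⟨F_1,...,F_{j−1}⟩ ∩ ⟨F_j⟩ is pure of dimension dim(F_j)−1. Then for each j, the minimal elements under divisibility of the set { m_{F_j}/gcd(m_{F_j}, m_{F_k}) : k < j } all have degree 1. -/
open Finset

/-- If the ordering `F_1,…,F_s` of the facets is a shelling (each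
`⟨F_1,…,F_{j-1}⟩ ∩ ⟨F_j⟩` is pure of dimension `dim F_j - 1`), then for each `j` the
minimal elements under divisibility of `{m_{F_j}/gcd(m_{F_j},m_{F_k}) : k < j}`
(whose supports are the sets `F_j \ F_k`) all have degree 1. -/
theorem shelling_implies_linear_residuals (n : ℕ) (l : List (Finset ℕ))
    (hnd : l.Nodup)
    (hvert : ∀ F ∈ l, F ⊆ Finset.range n)
    (hfacet : ∀ F ∈ l, ∀ G ∈ l, F ⊆ G → F = G)
    (hshell : isShelling l) :
    linearResiduals l := by
  classical
  intro i hi hil k hk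
  set Fi := l.getD i ∅ with hFidef
  set Fk := l.getD k ∅ with hFkdef
  set A : Set (Finset ℕ) :=
    genFaces {F | ∃ m < i, F = l.getD m ∅} ∩ genFaces {Fi} with hA
  have hGA : Fi ∩ Fk ∈ A :=
    ⟨⟨Fk, ⟨k, hk, rfl⟩, inter_subset_right⟩, ⟨Fi, rfl, inter_subset_left⟩⟩
  -- choose a maximal element of A containing Fi ∩ Fk
  set T : Finset (Finset ℕ) :=
    Fi.powerset.filter (fun H => H ∈ A ∧ Fi ∩ Fk ⊆ H) with hT
  have hTne : T.Nonempty := by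
    refine ⟨Fi ∩ Fk, ?_⟩
    simp [hT, Finset.mem_filter, Finset.mem_powerset, hGA, inter_subset_left]
  obtain ⟨H, hHT, hHmax⟩ := T.exists_max_image Finset.card hTne
  have hHT' := Finset.mem_filter.mp hHT
  have hHFi : H ⊆ Fi := Finset.mem_powerset.mp hHT'.1
  have hHA : H ∈ A := hHT'.2.1
  have hGH : Fi ∩ Fk ⊆ H := hHT'.2.2
  have hsubFi : ∀ H' ∈ A, H' ⊆ Fi := by
    rintro H' ⟨-, F, hF, hH'F⟩
    rcases hF with rfl
    exact hH'F
  have hfac : isFacetOf H A := by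
    refine ⟨hHA, fun H' hH' hHH' => ?_⟩
    have hH'T : H' ∈ T := by
      refine Finset.mem_filter.mpr ⟨Finset.mem_powerset.mpr (hsubFi H' hH'), hH', hGH.trans hHH'⟩
    exact Finset.eq_of_subset_of_card_le hHH' (hHmax H' hH'T)
  have hcard : (H.card : ℤ) = (Fi.card : ℤ) - 1 := hshell i hi hil H hfac
  have hFicard : Fi.card = H.card + 1 := by omega
  have hsd : (Fi \ H).card = 1 := by
    rw [Finset.card_sdiff_of_subset hHFi, hFicard]; omega
  -- extract m < i with H ⊆ F_m
  obtain ⟨F, ⟨m, hm, rfl⟩, hHF⟩ := hHA.1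
  set Fm := l.getD m ∅ with hFmdef
  refine ⟨m, hm, ?_, ?_⟩
  · intro x hx
    rw [Finset.mem_sdiff] at hx ⊢
    refine ⟨hx.1, fun hxk => hx.2 (hHF (hGH (Finset.mem_inter.mpr ⟨hx.1, hxk⟩)))⟩
  · have hsub : Fi \ Fm ⊆ Fi \ H := by
      intro x hx
      rw [Finset.mem_sdiff] at hx ⊢
      exact ⟨hx.1, fun hxH => hx.2 (hHF hxH)⟩
    have hne : Fi ≠ Fm := by
      intro heq
      have hmi : m ≠ i := Nat.ne_of_lt hm
      have h1 : l.getD i ∅ = l[i] := List.getD_eq_getElem l ∅ hil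
      have h2 : l.getD m ∅ = l[m] := List.getD_eq_getElem l ∅ (hm.trans hil)
      have : l[i] = l[m] := by rw [← h1, ← h2, ← hFidef, ← hFmdef, heq]
      exact hmi ((List.Nodup.getElem_inj_iff hnd).mp this.symm)
    have hnonempty : (Fi \ Fm).Nonempty := by
      rw [Finset.sdiff_nonempty]
      intro hsub'
      have hFil : Fi ∈ l := by
        rw [hFidef, List.getD_eq_getElem l ∅ hil]; exact List.getElem_mem _
      have hFml : Fm ∈ l := by
        rw [hFmdef, List.getD_eq_getElem l ∅ (hm.trans hil)]; exact List.getElem_mem _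
      exact hne (hfacet Fi hFil Fm hFml hsub')
    have h1 : 1 ≤ (Fi \ Fm).card := Finset.card_pos.mpr hnonempty
    have h2 : (Fi \ Fm).card ≤ 1 := hsd ▸ Finset.card_le_card hsub
    exact le_antisymm h2 h1
end

section
/- Let Δ be a simplicial complex on [n] with facets F_1,...,F_s in a fixed order such that for each 2 ≤ j ≤ s, the set of minimal elements under divisibility of { m_{F_j}/gcd(m_{F_j}, m_{F_k}) : k < j } consists of variables x_{j_1},...,x_{j_t}. Then the subcomplex ⟨F_1,...,F_{j−1}⟩ ∩ ⟨F_j⟩ equals ⟨F_j \ {j_1}, ..., F_j \ {j_t}⟩, and in particular is pure of dimension dim(F_j) − 1; hence Δ is shellable. -/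
open Finset

/-- If for each `j` the minimal residuals of `{m_{F_j}/gcd(m_{F_j},m_{F_k}) : k < j}`
are variables, then `⟨F_1,…,F_{j-1}⟩ ∩ ⟨F_j⟩ = ⟨F_j \ {j_1},…,F_j \ {j_t}⟩`, which is
pure of dimension `dim F_j - 1`; hence the ordering is a shelling and `Δ` is shellable. -/
theorem linear_residuals_implies_shelling (n : ℕ) (l : List (Finset ℕ))
    (hnd : l.Nodup) (hne : l ≠ [])
    (hvert : ∀ F ∈ l, F ⊆ Finset.range n)
    (hfacet : ∀ F ∈ l, ∀ G ∈ l, F ⊆ G → F = G)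
    (hlin : ∀ j, 0 < j → j < l.length → ∀ k < j,
      ∃ v, (∃ k' < j, l.getD j ∅ \ l.getD k' ∅ = {v}) ∧ v ∈ l.getD j ∅ \ l.getD k ∅) :
    (∀ j, 0 < j → j < l.length →
      genFaces {F | ∃ k < j, F = l.getD k ∅} ∩ genFaces {l.getD j ∅} =
        genFaces {G | ∃ v, (∃ k' < j, l.getD j ∅ \ l.getD k' ∅ = {v}) ∧
          G = (l.getD j ∅).erase v}) ∧
    isShelling l ∧ Shellable {F | F ∈ l} := by

  have main : ∀ j, 0 < j → j < l.length →
      genFaces {F | ∃ k < j, F = l.getD k ∅} ∩ genFaces {l.getD j ∅} =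
        genFaces {G | ∃ v, (∃ k' < j, l.getD j ∅ \ l.getD k' ∅ = {v}) ∧
          G = (l.getD j ∅).erase v} := by
    intro j hj hjl
    ext G
    simp only [genFaces, Set.mem_inter_iff, Set.mem_setOf_eq, Set.mem_singleton_iff]
    constructor
    · rintro ⟨⟨F, ⟨k, hk, rfl⟩, hGF⟩, ⟨F', rfl, hGF'⟩⟩
      obtain ⟨v, hv1, hv2⟩ := hlin j hj hjl k hk
      refine ⟨(l.getD j ∅).erase v, ⟨v, hv1, rfl⟩, ?_⟩
      intro x hx
      rw [Finset.mem_erase]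
      refine ⟨?_, hGF' hx⟩
      rintro rfl
      exact (Finset.mem_sdiff.mp hv2).2 (hGF hx)
    · rintro ⟨F, ⟨v, ⟨k', hk', hvk'⟩, rfl⟩, hGF⟩
      constructor
      · refine ⟨l.getD k' ∅, ⟨k', hk', rfl⟩, ?_⟩
        intro x hx
        have hx' := hGF hx
        rw [Finset.mem_erase] at hx'
        by_contra hxk
        have hxs : x ∈ l.getD j ∅ \ l.getD k' ∅ := Finset.mem_sdiff.mpr ⟨hx'.2, hxk⟩
        rw [hvk'] at hxs
        exact hx'.1 (Finset.mem_singleton.mp hxs)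
      · exact ⟨l.getD j ∅, rfl, fun x hx => (Finset.mem_erase.mp (hGF hx)).2⟩
  have hsh : isShelling l := by
    intro j hj hjl G hG
    rw [main j hj hjl] at hG
    obtain ⟨hGmem, hGmax⟩ := hG
    simp only [genFaces, Set.mem_setOf_eq] at hGmem hGmax
    obtain ⟨F, ⟨v, hv, rfl⟩, hGF⟩ := hGmem
    have hveq : G = (l.getD j ∅).erase v := hGmax _ ⟨_, ⟨v, hv, rfl⟩, subset_rfl⟩ hGF
    obtain ⟨k', hk', hvk'⟩ := hv
    have hvj : v ∈ l.getD j ∅ := by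
      have hm : v ∈ l.getD j ∅ \ l.getD k' ∅ := by
        rw [hvk']; exact Finset.mem_singleton_self v
      exact (Finset.mem_sdiff.mp hm).1
    have hc : 1 ≤ (l.getD j ∅).card := Finset.card_pos.mpr ⟨v, hvj⟩
    rw [hveq, Finset.card_erase_of_mem hvj]
    omega
  exact ⟨main, hsh, l, hnd, rfl, hsh⟩
end

section
/- Let Δ be a simplicial complex on [n] with facets F_1,...,F_s and fixed ordering, and define indeg(Res(I_{F_i})) = min{ deg(m_{F_i}/gcd(m_{F_i}, m_{F_k})) : k < i }. Then dim(⟨F_1,...,F_{i−1}⟩ ∩ ⟨F_i⟩) = dim(F_i) − indeg(Res(I_{F_i})) for all 2 ≤ i ≤ s. -/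
open Finset

/-- For ordered facets `F_1,…,F_s` and `2 ≤ i ≤ s`,
`dim (⟨F_1,…,F_{i-1}⟩ ∩ ⟨F_i⟩) = dim F_i - indeg(Res(I_{F_i}))`, where
`indeg(Res(I_{F_i})) = min {deg(m_{F_i}/gcd(m_{F_i},m_{F_k})) : k < i}
                     = min {|F_i \ F_k| : k < i}`. -/
theorem dim_intersection_eq (n : ℕ) (l : List (Finset ℕ))
    (hnd : l.Nodup)
    (hvert : ∀ F ∈ l, F ⊆ Finset.range n)
    (hfacet : ∀ F ∈ l, ∀ G ∈ l, F ⊆ G → F = G) :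
    ∀ i, 0 < i → i < l.length →
      ((sSup {m : ℕ | ∃ G ∈ genFaces {F | ∃ k < i, F = l.getD k ∅} ∩
          genFaces {l.getD i ∅}, G.card = m} : ℕ) : ℤ) - 1 =
        (((l.getD i ∅).card : ℤ) - 1) -
          ((sInf {m : ℕ | ∃ k < i, (l.getD i ∅ \ l.getD k ∅).card = m} : ℕ) : ℤ) := by
  intro i hi hil
  set F := l.getD i ∅ with hF
  set A : Set ℕ := {m : ℕ | ∃ k < i, (F \ l.getD k ∅).card = m} with hA
  have hAne : A.Nonempty := ⟨(F \ l.getD 0 ∅).card, 0, hi, rfl⟩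
  obtain ⟨k₀, hk₀, hk₀card⟩ := Nat.sInf_mem hAne
  have hsInf_le : sInf A ≤ F.card := by
    rw [← hk₀card]
    exact card_le_card sdiff_subset
  have hcard : ∀ k, (F ∩ l.getD k ∅).card = F.card - (F \ l.getD k ∅).card := by
    intro k
    have := card_sdiff_add_card_inter F (l.getD k ∅)
    omega
  have key : sSup {m : ℕ | ∃ G ∈ genFaces {F' | ∃ k < i, F' = l.getD k ∅} ∩
      genFaces {F}, G.card = m} = F.card - sInf A := by
    have hmem : F.card - sInf A ∈ {m : ℕ | ∃ G ∈ genFaces {F' | ∃ k < i, F' = l.getD k ∅} ∩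
        genFaces {F}, G.card = m} := by
      refine ⟨F ∩ l.getD k₀ ∅, ⟨⟨l.getD k₀ ∅, ⟨k₀, hk₀, rfl⟩, inter_subset_right⟩,
        ⟨F, rfl, inter_subset_left⟩⟩, ?_⟩
      rw [hcard, hk₀card]
    apply le_antisymm
    · apply csSup_le ⟨_, hmem⟩
      rintro m ⟨G, ⟨⟨Fk, ⟨k, hk, rfl⟩, hGFk⟩, F', hF', hGF⟩, rfl⟩
      have hF'eq : F' = F := hF'
      subst hF'eq
      have hsub : G ⊆ F ∩ l.getD k ∅ := subset_inter hGF hGFk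
      have h1 : G.card ≤ (F ∩ l.getD k ∅).card := card_le_card hsub
      have h2 : sInf A ≤ (F \ l.getD k ∅).card := Nat.sInf_le ⟨k, hk, rfl⟩
      have := hcard k
      omega
    · apply le_csSup _ hmem
      refine ⟨F.card, ?_⟩
      rintro m ⟨G, ⟨_, F', hF', hGF⟩, rfl⟩
      have hF'eq : F' = F := hF'
      subst hF'eq
      exact card_le_card hGF
  rw [key]
  omega
end

section
/- The simplicial complex Δ = ⟨{1,2,3}, {2,3,4}, {3,4,5}, {4,5,1}⟩ on [5] is pure of dimension 2 and is not shellable, yet its facet ideal I = (x_1x_2x_3, x_2x_3x_4, x_3x_4x_5, x_4x_5x_1) has quasi-linear quotients with respect to the given ordering, i.e., for each i > 1 the colon ideal (m_1,...,m_{i−1}) : m_i contains a variable. -/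
open Finset

open MvPolynomial

lemma shelling_aux (l : List (Finset ℕ)) (hnd : l.Nodup)
    (hset : {F | F ∈ l} = ({({1, 2, 3} : Finset ℕ), {2, 3, 4}, {3, 4, 5}, {4, 5, 1}} :
        Set (Finset ℕ)))
    (E F : Finset ℕ) (hE : E ∈ l) (hF : F ∈ l)
    (h1E : (1:ℕ) ∈ E) (h1F : (1:ℕ) ∈ F)
    (honly : ∀ H : Finset ℕ, H ∈ ({({1, 2, 3} : Finset ℕ), {2, 3, 4}, {3, 4, 5}, {4, 5, 1}} :
        Set (Finset ℕ)) → (1:ℕ) ∈ H → H = E ∨ H = F)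
    (hinter : E ∩ F = {1}) (hFcard : F.card = 3)
    (hlt : l.idxOf E < l.idxOf F) :
    ¬ isShelling l := by
  intro hsh
  set j := l.idxOf F with hj
  have hjlen : j < l.length := List.idxOf_lt_length_iff.2 hF
  have hilen : l.idxOf E < l.length := lt_trans hlt hjlen
  have hgetj : l.getD j ∅ = F := by
    rw [List.getD_eq_getElem _ _ hjlen]; exact List.getElem_idxOf hjlen
  have hgeti : l.getD (l.idxOf E) ∅ = E := by
    rw [List.getD_eq_getElem _ _ hilen]; exact List.getElem_idxOf hilen
  have hfacet : isFacetOf {1}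
      (genFaces {G | ∃ k < j, G = l.getD k ∅} ∩ genFaces {l.getD j ∅}) := by
    constructor
    · constructor
      · exact ⟨E, ⟨l.idxOf E, hlt, hgeti.symm⟩, by simpa using h1E⟩
      · exact ⟨l.getD j ∅, rfl, by rw [hgetj]; simpa using h1F⟩
    · rintro H ⟨⟨K, ⟨k, hk, rfl⟩, hHK⟩, F', hF', hHF⟩ hsub
      rw [Set.mem_singleton_iff] at hF'
      subst hF'
      rw [hgetj] at hHF
      have hklen : k < l.length := lt_trans hk hjlen
      have hKget : l.getD k ∅ = l[k] := List.getD_eq_getElem _ _ hklen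
      have hKmem : l[k] ∈ l := List.getElem_mem _
      have hKS : l[k] ∈ ({({1, 2, 3} : Finset ℕ), {2, 3, 4}, {3, 4, 5}, {4, 5, 1}} :
          Set (Finset ℕ)) := by rw [← hset]; exact hKmem
      have h1H : (1:ℕ) ∈ H := hsub (by simp)
      have h1K : (1:ℕ) ∈ l[k] := by rw [hKget] at hHK; exact hHK h1H
      rcases honly _ hKS h1K with hKE | hKF
      · -- K = E, so H ⊆ E ∩ F = {1}
        have hHE : H ⊆ E := by rw [hKget, hKE] at hHK; exact hHK
        have : H ⊆ ({1} : Finset ℕ) := by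
          rw [← hinter]; exact Finset.subset_inter hHE hHF
        exact (Finset.Subset.antisymm hsub this).symm ▸ rfl
      · -- K = F : impossible since k < j = indexOf F
        exfalso
        have : l[k] = l[j] := by rw [hKF, ← hgetj, List.getD_eq_getElem _ _ hjlen]
        have := (hnd.getElem_inj_iff).1 this
        omega
  have := hsh j (lt_of_le_of_lt (Nat.zero_le _) hlt) hjlen {1} hfacet
  rw [hgetj, hFcard] at this
  simp at this

/-- The complex `Δ = ⟨{1,2,3},{2,3,4},{3,4,5},{4,5,1}⟩` is pure of dimension 2 and not
shellable, yet its facet ideal `(x₁x₂x₃, x₂x₃x₄, x₃x₄x₅, x₄x₅x₁)` has quasi-linear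
quotients in the given order: each colon ideal `(m_1,…,m_{i-1}) : m_i` contains a
variable. -/
theorem quasiLinear_not_shellable :
    (∀ F ∈ ({({1, 2, 3} : Finset ℕ), {2, 3, 4}, {3, 4, 5}, {4, 5, 1}} :
        Set (Finset ℕ)), F.card = 3) ∧
    ¬ Shellable ({({1, 2, 3} : Finset ℕ), {2, 3, 4}, {3, 4, 5}, {4, 5, 1}} :
        Set (Finset ℕ)) ∧
    (∀ m : Fin 4 → MvPolynomial ℕ ℚ,
      m = ![X 1 * X 2 * X 3, X 2 * X 3 * X 4, X 3 * X 4 * X 5, X 4 * X 5 * X 1] →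
      ∀ i : Fin 4, 0 < (i : ℕ) →
        ∃ v : ℕ, X v ∈ Submodule.colon
          (Ideal.span {p | ∃ k : Fin 4, (k : ℕ) < (i : ℕ) ∧ p = m k})
          (Ideal.span {m i})) := by
  refine ⟨?_, ?_, ?_⟩
  · intro F hF
    rcases hF with h | h | h | h <;> subst h <;> decide
  · rintro ⟨l, hnd, hset, hsh⟩
    have hA : ({1,2,3} : Finset ℕ) ∈ l := by
      rw [show (({1,2,3} : Finset ℕ) ∈ l) = (({1,2,3} : Finset ℕ) ∈ {F | F ∈ l}) from rfl, hset]
      left; rfl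
    have hD : ({4,5,1} : Finset ℕ) ∈ l := by
      rw [show (({4,5,1} : Finset ℕ) ∈ l) = (({4,5,1} : Finset ℕ) ∈ {F | F ∈ l}) from rfl, hset]
      right; right; right; rfl
    have hne : l.idxOf ({1,2,3} : Finset ℕ) ≠ l.idxOf ({4,5,1} : Finset ℕ) := by
      intro h
      have h1 : l.getD (l.idxOf ({1,2,3} : Finset ℕ)) ∅ = {1,2,3} := by
        rw [List.getD_eq_getElem _ _ (List.idxOf_lt_length_iff.2 hA)]
        exact List.getElem_idxOf _
      have h2 : l.getD (l.idxOf ({4,5,1} : Finset ℕ)) ∅ = {4,5,1} := by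
        rw [List.getD_eq_getElem _ _ (List.idxOf_lt_length_iff.2 hD)]
        exact List.getElem_idxOf _
      rw [h] at h1
      rw [h1] at h2
      exact absurd h2 (by decide)
    have honlyAD : ∀ H : Finset ℕ,
        H ∈ ({({1, 2, 3} : Finset ℕ), {2, 3, 4}, {3, 4, 5}, {4, 5, 1}} : Set (Finset ℕ)) →
        (1:ℕ) ∈ H → H = ({1,2,3} : Finset ℕ) ∨ H = ({4,5,1} : Finset ℕ) := by
      rintro H (h | h | h | h) h1 <;> subst h <;> revert h1 <;> decide
    rcases lt_or_gt_of_ne hne with hlt | hlt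
    · exact shelling_aux l hnd hset {1,2,3} {4,5,1} hA hD (by decide) (by decide)
        honlyAD (by decide) (by decide) hlt hsh
    · exact shelling_aux l hnd hset {4,5,1} {1,2,3} hD hA (by decide) (by decide)
        (fun H hH h1 => (honlyAD H hH h1).symm) (by decide) (by decide) hlt hsh
  · intro m hm i hi
    subst hm
    have key : ∀ (v w : ℕ) (k : Fin 4), (k:ℕ) < (i:ℕ) →
        X v * (![X 1 * X 2 * X 3, X 2 * X 3 * X 4, X 3 * X 4 * X 5, X 4 * X 5 * X 1] i
          : MvPolynomial ℕ ℚ) =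
        X w * ![X 1 * X 2 * X 3, X 2 * X 3 * X 4, X 3 * X 4 * X 5, X 4 * X 5 * X 1] k →
        ∃ v : ℕ, (X v : MvPolynomial ℕ ℚ) ∈ Submodule.colon
          (Ideal.span {p | ∃ k : Fin 4, (k : ℕ) < (i : ℕ) ∧
            p = ![X 1 * X 2 * X 3, X 2 * X 3 * X 4, X 3 * X 4 * X 5, X 4 * X 5 * X 1] k})
          (Ideal.span {![X 1 * X 2 * X 3, X 2 * X 3 * X 4, X 3 * X 4 * X 5,
            X 4 * X 5 * X 1] i} : Ideal (MvPolynomial ℕ ℚ)) := by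
      intro v w k hk heq
      refine ⟨v, Ideal.mem_colon_span_singleton.2 (?_ : (X v : MvPolynomial ℕ ℚ) * _ ∈ _)⟩
      rw [heq]
      exact Ideal.mul_mem_left _ _ (Ideal.subset_span ⟨k, hk, rfl⟩)
    fin_cases i
    · simp at hi
    · exact key 1 4 0 (by norm_num) (by simp [Matrix.cons_val_zero, Matrix.cons_val_one]; ring)
    · exact key 2 5 1 (by norm_num) (by simp [Matrix.cons_val_zero, Matrix.cons_val_one]; ring)
    · exact key 3 1 2 (by norm_num) (by simp; ring)
end

section
/- Let Δ be a simplicial complex with facets F_1,...,F_r, r > 1, and let m_{F_j} be the corresponding squarefree monomials. A facet F_i is a leaf of Δ (there exists k ≠ i with F_i ∩ F_j ⊆ F_i ∩ F_k for all j ≠ i) if and only if the monomial ideal generated by { m_{F_i}/gcd(m_{F_i}, m_{F_j}) : j ≠ i } is a principal ideal. -/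
open Finset MvPolynomial

set_option maxHeartbeats 1000000

/-- The exponent finsupp of the squarefree monomial on a finite vertex set. -/
noncomputable def expOf (s : Finset ℕ) : ℕ →₀ ℕ := ∑ v ∈ s, Finsupp.single v 1

lemma expOf_apply (s : Finset ℕ) (v : ℕ) :
    expOf s v = if v ∈ s then 1 else 0 := by
  classical
  rw [expOf, Finsupp.finset_sum_apply]
  rw [Finset.sum_congr rfl (fun u _ => Finsupp.single_apply)]
  exact Finset.sum_ite_eq' s v (fun _ => 1)

lemma expOf_le_iff {s t : Finset ℕ} : expOf s ≤ expOf t ↔ s ⊆ t := by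
  constructor
  · intro h v hv
    have := h v
    rw [expOf_apply, expOf_apply, if_pos hv] at this
    by_contra hvt
    rw [if_neg hvt] at this
    omega
  · intro h v
    rw [expOf_apply, expOf_apply]
    by_cases hv : v ∈ s
    · rw [if_pos hv, if_pos (h hv)]
    · simp [hv]

lemma prod_X_eq_monomial_expOf (s : Finset ℕ) :
    (∏ v ∈ s, X v : MvPolynomial ℕ ℚ) = monomial (expOf s) 1 := by
  classical
  induction s using Finset.induction_on with
  | empty => simp [expOf]
  | @insert a s h ih =>
    have he : expOf (insert a s) = Finsupp.single a 1 + expOf s := by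
      rw [expOf, expOf, Finset.sum_insert h]
    rw [Finset.prod_insert h, ih, MvPolynomial.X, monomial_mul, one_mul, he]

/-- Minimal (w.r.t. lex) exponents multiply without interference. -/
lemma coeff_mul_of_lex_min {p q : MvPolynomial ℕ ℚ} {bp bq : ℕ →₀ ℕ}
    (hbp : ∀ b ∈ p.support, toLex bp ≤ toLex b)
    (hbq : ∀ b ∈ q.support, toLex bq ≤ toLex b) :
    (p * q).coeff (bp + bq) = p.coeff bp * q.coeff bq := by
  classical
  rw [MvPolynomial.coeff_mul]
  apply Finset.sum_eq_single (bp, bq)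
  · rintro ⟨u, v⟩ huv hne
    rw [Finset.HasAntidiagonal.mem_antidiagonal] at huv
    by_cases hu : p.coeff u = 0
    · simp [hu]
    by_cases hv : q.coeff v = 0
    · simp [hv]
    exfalso
    have h1 : toLex bp ≤ toLex u := hbp u (MvPolynomial.mem_support_iff.2 hu)
    have h2 : toLex bq ≤ toLex v := hbq v (MvPolynomial.mem_support_iff.2 hv)
    have hsum : toLex u + toLex v = toLex bp + toLex bq := congrArg toLex huv
    have hu' : toLex u = toLex bp := by
      have : toLex u + toLex bq ≤ toLex bp + toLex bq := by
        calc toLex u + toLex bq ≤ toLex u + toLex v := add_le_add_right h2 _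
        _ = toLex bp + toLex bq := hsum
      exact le_antisymm (le_of_add_le_add_right this) h1
    have hv' : toLex v = toLex bq := by
      have : toLex bp + toLex v ≤ toLex bp + toLex bq := by
        calc toLex bp + toLex v ≤ toLex u + toLex v := add_le_add_left h1 _
        _ = toLex bp + toLex bq := hsum
      exact le_antisymm (le_of_add_le_add_left this) h2
    exact hne (Prod.ext (toLex.injective hu') (toLex.injective hv'))
  · intro (h : (bp, bq) ∉ Finset.HasAntidiagonal.antidiagonal (bp + bq))
    exact absurd (Finset.HasAntidiagonal.mem_antidiagonal.mpr rfl : (bp, bq) ∈ Finset.HasAntidiagonal.antidiagonal (bp + bq)) h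

/-- Maximal (w.r.t. lex) exponents multiply without interference. -/
lemma coeff_mul_of_lex_max {p q : MvPolynomial ℕ ℚ} {bp bq : ℕ →₀ ℕ}
    (hbp : ∀ b ∈ p.support, toLex b ≤ toLex bp)
    (hbq : ∀ b ∈ q.support, toLex b ≤ toLex bq) :
    (p * q).coeff (bp + bq) = p.coeff bp * q.coeff bq := by
  classical
  rw [MvPolynomial.coeff_mul]
  apply Finset.sum_eq_single (bp, bq)
  · rintro ⟨u, v⟩ huv hne
    rw [Finset.HasAntidiagonal.mem_antidiagonal] at huv
    by_cases hu : p.coeff u = 0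
    · simp [hu]
    by_cases hv : q.coeff v = 0
    · simp [hv]
    exfalso
    have h1 : toLex u ≤ toLex bp := hbp u (MvPolynomial.mem_support_iff.2 hu)
    have h2 : toLex v ≤ toLex bq := hbq v (MvPolynomial.mem_support_iff.2 hv)
    have hsum : toLex u + toLex v = toLex bp + toLex bq := congrArg toLex huv
    have hu' : toLex u = toLex bp := by
      have : toLex bp + toLex bq ≤ toLex u + toLex bq := by
        calc toLex bp + toLex bq = toLex u + toLex v := hsum.symm
        _ ≤ toLex u + toLex bq := add_le_add_right h2 _
      exact le_antisymm h1 (le_of_add_le_add_right this)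
    have hv' : toLex v = toLex bq := by
      have : toLex bp + toLex bq ≤ toLex bp + toLex v := by
        calc toLex bp + toLex bq = toLex u + toLex v := hsum.symm
        _ ≤ toLex bp + toLex v := add_le_add_left h1 _
      exact le_antisymm h2 (le_of_add_le_add_left this)
    exact hne (Prod.ext (toLex.injective hu') (toLex.injective hv'))
  · intro (h : (bp, bq) ∉ Finset.HasAntidiagonal.antidiagonal (bp + bq))
    exact absurd (Finset.HasAntidiagonal.mem_antidiagonal.mpr rfl : (bp, bq) ∈ Finset.HasAntidiagonal.antidiagonal (bp + bq)) h

/-- A divisor of a monomial has all its exponents dominated by the monomial's exponent. -/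
lemma support_le_of_mul_eq_monomial {p q : MvPolynomial ℕ ℚ} {a : ℕ →₀ ℕ}
    (h : p * q = monomial a 1) : ∀ b ∈ p.support, b ≤ a := by
  classical
  have hne : p * q ≠ 0 := by
    rw [h]
    simp [MvPolynomial.monomial_eq_zero]
  have hp0 : p ≠ 0 := fun hp => hne (by rw [hp, zero_mul])
  have hq0 : q ≠ 0 := fun hq => hne (by rw [hq, mul_zero])
  have hps : p.support.Nonempty := Finset.nonempty_iff_ne_empty.2
    (fun he => hp0 (MvPolynomial.support_eq_empty.1 he))
  have hqs : q.support.Nonempty := Finset.nonempty_iff_ne_empty.2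
    (fun he => hq0 (MvPolynomial.support_eq_empty.1 he))
  obtain ⟨b1, hb1, hb1min⟩ := Finset.exists_min_image p.support toLex hps
  obtain ⟨b2, hb2, hb2max⟩ := Finset.exists_max_image p.support toLex hps
  obtain ⟨c1, hc1, hc1min⟩ := Finset.exists_min_image q.support toLex hqs
  obtain ⟨c2, hc2, hc2max⟩ := Finset.exists_max_image q.support toLex hqs
  have key : ∀ b c : ℕ →₀ ℕ, (p * q).coeff (b + c) = p.coeff b * q.coeff c →
      b ∈ p.support → c ∈ q.support → b + c = a := by
    intro b c hbc hb hc
    have hnz : (p * q).coeff (b + c) ≠ 0 := by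
      rw [hbc]
      exact mul_ne_zero (MvPolynomial.mem_support_iff.1 hb) (MvPolynomial.mem_support_iff.1 hc)
    rw [h, MvPolynomial.coeff_monomial] at hnz
    by_contra hab
    exact hnz (if_neg (fun hh => hab hh.symm))
  have h1 : b1 + c1 = a := key b1 c1 (coeff_mul_of_lex_min hb1min hc1min) hb1 hc1
  have h2 : b2 + c2 = a := key b2 c2 (coeff_mul_of_lex_max hb2max hc2max) hb2 hc2
  have hb12 : toLex b1 = toLex b2 := by
    have hsum : toLex b1 + toLex c1 = toLex b2 + toLex c2 :=
      congrArg toLex (h1.trans h2.symm)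
    have hcc : toLex c1 ≤ toLex c2 := le_trans (hc1min c2 hc2) le_rfl
    have hbb : toLex b1 ≤ toLex b2 := le_trans le_rfl (hb2max b1 hb1)
    have : toLex b2 + toLex c2 ≤ toLex b2 + toLex c1 := by
      calc toLex b2 + toLex c2 = toLex b1 + toLex c1 := hsum.symm
      _ ≤ toLex b2 + toLex c1 := add_le_add_left hbb _
    have hcc' : toLex c2 ≤ toLex c1 := le_of_add_le_add_left this
    have hc12 : toLex c1 = toLex c2 := le_antisymm hcc hcc'
    have : toLex b1 + toLex c1 = toLex b2 + toLex c1 := by rw [hsum, hc12]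
    exact add_right_cancel this
  intro b hb
  have : toLex b = toLex b1 := le_antisymm (hb12 ▸ hb2max b hb) (hb1min b hb)
  have hbb1 : b = b1 := toLex.injective this
  exact le_iff_exists_add.2 ⟨c1, by rw [hbb1, ← h1]⟩

/-- For a simplicial complex with facets `F_1,…,F_r` (`r > 1`), the facet `F_i` is a
leaf (there is `k ≠ i` with `F_i ∩ F_j ⊆ F_i ∩ F_k` for all `j ≠ i`) if and only if the
monomial ideal generated by the residuals `m_{F_i}/gcd(m_{F_i}, m_{F_j})`
`(= ∏_{v ∈ F_i \ F_j} x_v)`, `j ≠ i`, is principal. -/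
theorem leaf_iff_principal_residual_ideal (n r : ℕ) (hr : 1 < r)
    (F : Fin r → Finset ℕ)
    (hvert : ∀ j, F j ⊆ Finset.range n)
    (hfacet : ∀ j j', F j ⊆ F j' → j = j')
    (i : Fin r) :
    (∃ k, k ≠ i ∧ ∀ j, j ≠ i → F i ∩ F j ⊆ F i ∩ F k) ↔
      Submodule.IsPrincipal
        (Ideal.span {p : MvPolynomial ℕ ℚ | ∃ j, j ≠ i ∧ p = ∏ v ∈ F i \ F j, X v}) := by
  classical
  set S : Set (MvPolynomial ℕ ℚ) :=
    {p : MvPolynomial ℕ ℚ | ∃ j, j ≠ i ∧ p = ∏ v ∈ F i \ F j, X v} with hS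
  constructor
  · -- leaf → principal
    rintro ⟨k, hk, hleaf⟩
    have hsub : ∀ j, j ≠ i → F i \ F k ⊆ F i \ F j := by
      intro j hj v hv
      rw [Finset.mem_sdiff] at hv ⊢
      refine ⟨hv.1, fun hvj => hv.2 ?_⟩
      exact (Finset.mem_inter.1 (hleaf j hj (Finset.mem_inter.2 ⟨hv.1, hvj⟩))).2
    have hspan : Ideal.span S = Ideal.span {(∏ v ∈ F i \ F k, X v : MvPolynomial ℕ ℚ)} := by
      apply le_antisymm
      · rw [Ideal.span_le]
        rintro p ⟨j, hj, rfl⟩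
        rw [SetLike.mem_coe, Ideal.mem_span_singleton]
        exact ⟨∏ v ∈ (F i \ F j) \ (F i \ F k), X v,
          by rw [mul_comm, Finset.prod_sdiff (hsub j hj)]⟩
      · rw [Ideal.span_le, Set.singleton_subset_iff]
        exact Ideal.subset_span ⟨k, hk, rfl⟩
    exact ⟨⟨_, hspan⟩⟩
  · -- principal → leaf
    rintro ⟨⟨p, hp⟩⟩
    have hp' : Ideal.span S = Ideal.span {p} := by
      rw [hp, Ideal.submodule_span_eq]
    -- every residual monomial is divisible by p
    have hdvd : ∀ j : Fin r, j ≠ i →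
        p ∣ monomial (expOf (F i \ F j)) (1 : ℚ) := by
      intro j hj
      rw [← Ideal.mem_span_singleton, ← hp']
      exact Ideal.subset_span ⟨j, hj, (prod_X_eq_monomial_expOf _).symm⟩
    -- hence all exponents of p are dominated
    have hdom : ∀ j : Fin r, j ≠ i → ∀ b ∈ p.support, b ≤ expOf (F i \ F j) := by
      intro j hj
      obtain ⟨q, hq⟩ := hdvd j hj
      exact support_le_of_mul_eq_monomial hq.symm
    -- p is nonzero
    obtain ⟨k0, hk0⟩ := Fintype.exists_ne_of_one_lt_card (by simpa using hr) i
    have hp0 : p ≠ 0 := by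
      intro h0
      obtain ⟨q, hq⟩ := hdvd k0 hk0
      rw [h0, zero_mul] at hq
      exact (by simp [MvPolynomial.monomial_eq_zero] :
        monomial (expOf (F i \ F k0)) (1 : ℚ) ≠ 0) hq
    obtain ⟨b, hb⟩ := Finset.nonempty_iff_ne_empty.2
      (fun he => hp0 (MvPolynomial.support_eq_empty.1 he)) |>.exists_mem
    -- p lies in the monomial ideal, so some generator exponent is below b
    have hSim : S = (fun a => monomial a (1 : ℚ)) ''
        {a : ℕ →₀ ℕ | ∃ j, j ≠ i ∧ a = expOf (F i \ F j)} := by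
      ext x
      constructor
      · rintro ⟨j, hj, rfl⟩
        exact ⟨expOf (F i \ F j), ⟨j, hj, rfl⟩, (prod_X_eq_monomial_expOf _).symm⟩
      · rintro ⟨a, ⟨j, hj, rfl⟩, rfl⟩
        exact ⟨j, hj, (prod_X_eq_monomial_expOf _).symm⟩
    have hpS : p ∈ Ideal.span S := by
      rw [hp']
      exact Ideal.subset_span rfl
    rw [hSim, MvPolynomial.mem_ideal_span_monomial_image] at hpS
    obtain ⟨a, ⟨k, hk, rfl⟩, hab⟩ := hpS b hb
    refine ⟨k, hk, fun j hj => ?_⟩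
    have hle : expOf (F i \ F k) ≤ expOf (F i \ F j) :=
      le_trans hab (hdom j hj b hb)
    have hsub : F i \ F k ⊆ F i \ F j := expOf_le_iff.1 hle
    intro v hv
    rw [Finset.mem_inter] at hv ⊢
    refine ⟨hv.1, ?_⟩
    by_contra hvk
    have : v ∈ F i \ F j := hsub (Finset.mem_sdiff.2 ⟨hv.1, hvk⟩)
    exact (Finset.mem_sdiff.1 this).2 hv.2
end

section
/- Let G be a finite simple connected graph. Then the Gallai simplicial complex Δ_Γ(G) is connected: for any two facets F, H of Δ_Γ(G) there is a sequence of facets F = F_0, F_1, ..., F_t = H with F_i ∩ F_{i+1} ≠ ∅ for all i. -/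
open Finset

/-- The set of Gallai-indices `Ω(G)` of a graph `G`: the triples `{i,j,k}` where the
edges `{i,j}` and `{j,k}` are adjacent in the Gallai graph `Γ(G)` (incident but not
spanning a triangle), together with the pairs `{i,j}` where the edge `{i,j}` is an
isolated vertex of `Γ(G)`. -/
def gallaiIndices {V : Type*} [DecidableEq V] (G : SimpleGraph V) : Set (Finset V) :=
  {F | (∃ i j k, G.Adj i j ∧ G.Adj j k ∧ ¬ G.Adj i k ∧ i ≠ k ∧ F = {i, j, k}) ∨
       (∃ i j, G.Adj i j ∧ (∀ k, G.Adj j k → k ≠ i → G.Adj i k) ∧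
          (∀ k, G.Adj i k → k ≠ j → G.Adj j k) ∧ F = {i, j})}


lemma face_le_facet_aux {V : Type*} [Fintype V] (S : Set (Finset V)) :
    ∀ n (F : Finset V), Fintype.card V - F.card ≤ n → F ∈ genFaces S →
    ∃ K, isFacetOf K (genFaces S) ∧ F ⊆ K := by
  intro n
  induction n with
  | zero =>
    intro F hn hF
    refine ⟨F, ⟨hF, fun H hH hs => ?_⟩, subset_rfl⟩
    have h1 : H.card ≤ Fintype.card V := Finset.card_le_univ H
    exact Finset.eq_of_subset_of_card_le hs (by omega)
  | succ n ih =>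
    intro F hn hF
    by_cases h : ∃ H ∈ genFaces S, F ⊆ H ∧ F ≠ H
    · obtain ⟨H, hH, hFH, hne⟩ := h
      have hlt : F.card < H.card := Finset.card_lt_card (Finset.ssubset_iff_subset_ne.mpr ⟨hFH, hne⟩)
      have h1 : H.card ≤ Fintype.card V := Finset.card_le_univ H
      obtain ⟨K, hK, hHK⟩ := ih H (by omega) hH
      exact ⟨K, hK, hFH.trans hHK⟩
    · push_neg at h
      exact ⟨F, ⟨hF, fun H hH hs => h H hH hs⟩, subset_rfl⟩

lemma face_le_facet {V : Type*} [Fintype V] (S : Set (Finset V))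
    (F : Finset V) (hF : F ∈ genFaces S) :
    ∃ K, isFacetOf K (genFaces S) ∧ F ⊆ K :=
  face_le_facet_aux S _ F le_rfl hF

lemma edge_mem_faces {V : Type*} [DecidableEq V] (G : SimpleGraph V) {a b : V}
    (hab : G.Adj a b) : ({a, b} : Finset V) ∈ genFaces (gallaiIndices G) := by
  by_cases h : (∃ k, G.Adj b k ∧ k ≠ a ∧ ¬ G.Adj a k) ∨
      (∃ k, G.Adj a k ∧ k ≠ b ∧ ¬ G.Adj b k)
  · rcases h with ⟨k, h1, h2, h3⟩ | ⟨k, h1, h2, h3⟩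
    · refine ⟨{a, b, k}, Or.inl ⟨a, b, k, hab, h1, h3, h2.symm, rfl⟩, ?_⟩
      intro x hx; simp at hx ⊢; tauto
    · refine ⟨{b, a, k}, Or.inl ⟨b, a, k, hab.symm, h1, h3, h2.symm, rfl⟩, ?_⟩
      intro x hx; simp at hx ⊢; tauto
  · push_neg at h
    exact ⟨{a, b}, Or.inr ⟨a, b, hab, fun k hk hka => h.1 k hk hka,
      fun k hk hkb => h.2 k hk hkb, rfl⟩, subset_rfl⟩

lemma facet_nonempty {V : Type*} [DecidableEq V] (G : SimpleGraph V) {F : Finset V}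
    (hF : isFacetOf F (genFaces (gallaiIndices G))) : F.Nonempty := by
  obtain ⟨⟨F', hF', hsub⟩, hmax⟩ := hF
  have hFF : F = F' := hmax F' ⟨F', hF', subset_rfl⟩ hsub
  subst hFF
  rcases hF' with ⟨i, j, k, _, _, _, _, rfl⟩ | ⟨i, j, _, _, _, rfl⟩
  · exact ⟨i, by simp⟩
  · exact ⟨i, by simp⟩

lemma chain_cons {V : Type*} [Fintype V] [DecidableEq V] (G : SimpleGraph V)
    {F K H : Finset V} (hF : isFacetOf F (genFaces (gallaiIndices G)))
    (hFK : (F ∩ K).Nonempty)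
    (h : ∃ (t : ℕ) (c : ℕ → Finset V), c 0 = K ∧ c t = H ∧
        (∀ i ≤ t, isFacetOf (c i) (genFaces (gallaiIndices G))) ∧
        (∀ i < t, (c i ∩ c (i + 1)).Nonempty)) :
    ∃ (t : ℕ) (c : ℕ → Finset V), c 0 = F ∧ c t = H ∧
        (∀ i ≤ t, isFacetOf (c i) (genFaces (gallaiIndices G))) ∧
        (∀ i < t, (c i ∩ c (i + 1)).Nonempty) := by
  obtain ⟨t, c, hc0, hct, hfac, hint⟩ := h
  refine ⟨t + 1, fun n => if n = 0 then F else c (n - 1), by simp, by simp [hct], ?_, ?_⟩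
  · intro i hi
    rcases Nat.eq_zero_or_pos i with rfl | hpos
    · simpa using hF
    · simp only [Nat.pos_iff_ne_zero.mp hpos, if_neg (Nat.pos_iff_ne_zero.mp hpos)]
      exact hfac (i - 1) (by omega)
  · intro i hi
    rcases Nat.eq_zero_or_pos i with rfl | hpos
    · simpa [hc0] using hFK
    · have h1 : i ≠ 0 := Nat.pos_iff_ne_zero.mp hpos
      simp only [if_neg h1, if_neg (Nat.succ_ne_zero i)]
      have : i + 1 - 1 = (i - 1) + 1 := by omega
      rw [this]
      exact hint (i - 1) (by omega)

lemma walk_chain {V : Type*} [Fintype V] [DecidableEq V] (G : SimpleGraph V) :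
    ∀ {v w : V} (_ : G.Walk v w) (F : Finset V),
      isFacetOf F (genFaces (gallaiIndices G)) → v ∈ F →
      ∀ H, isFacetOf H (genFaces (gallaiIndices G)) → w ∈ H →
      ∃ (t : ℕ) (c : ℕ → Finset V), c 0 = F ∧ c t = H ∧
        (∀ i ≤ t, isFacetOf (c i) (genFaces (gallaiIndices G))) ∧
        (∀ i < t, (c i ∩ c (i + 1)).Nonempty) := by
  intro v w p
  induction p with
  | nil =>
    intro F hF hv H hH hw
    refine ⟨1, fun n => if n = 0 then F else H, by simp, by simp, ?_, ?_⟩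
    · intro i hi
      rcases Nat.eq_zero_or_pos i with rfl | hpos
      · simpa using hF
      · simpa [Nat.pos_iff_ne_zero.mp hpos] using hH
    · intro i hi
      interval_cases i
      exact ⟨_, Finset.mem_inter.2 ⟨by simpa using hv, by simpa using hw⟩⟩
  | @cons a b w hab p ih =>
    intro F hF hv H hH hw
    obtain ⟨K, hK, hsub⟩ := face_le_facet _ _ (edge_mem_faces G hab)
    have hbK : b ∈ K := hsub (by simp)
    have haK : a ∈ K := hsub (by simp)
    exact chain_cons G hF ⟨a, Finset.mem_inter.2 ⟨hv, haK⟩⟩ (ih K hK hbK H hH hw)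

/-- For a finite simple connected graph `G` (with at least one edge), the Gallai
simplicial complex `Δ_Γ(G)` is connected: any two facets are joined by a chain of
facets with consecutive nonempty intersections. -/
theorem gallai_complex_connected {V : Type*} [Fintype V] [DecidableEq V]
    (G : SimpleGraph V) (hc : G.Connected) (he : ∃ i j, G.Adj i j) :
    ∀ F H : Finset V, isFacetOf F (genFaces (gallaiIndices G)) →
      isFacetOf H (genFaces (gallaiIndices G)) →
      ∃ (t : ℕ) (c : ℕ → Finset V), c 0 = F ∧ c t = H ∧
        (∀ i ≤ t, isFacetOf (c i) (genFaces (gallaiIndices G))) ∧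
        (∀ i < t, (c i ∩ c (i + 1)).Nonempty) := by
  intro F H hF hH
  obtain ⟨v, hv⟩ := facet_nonempty G hF
  obtain ⟨w, hw⟩ := facet_nonempty G hH
  obtain ⟨p⟩ := hc.preconnected v w
  exact walk_chain G p F hF hv H hH hw
end

section
/- Let P = v_1, v_2, ..., v_m (m ≥ 3) be a path, and consider the simplicial complex with facets F_i = {v_i, v_{i+1}, v_{i+2}} for 1 ≤ i ≤ m−2 in this order. Then the corresponding facet ideal (m_{F_1}, ..., m_{F_{m−2}}) has linear residuals with respect to this ordering: for each i ≥ 2, the minimal elements under divisibility of { m_{F_i}/gcd(m_{F_i}, m_{F_k}) : k < i } have degree 1 (indeed, the set's minimal element is x_{v_{i+2}}). -/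
open Finset

lemma path_diff (F : ℕ → Finset ℕ) (hF : ∀ i, F i = {i, i + 1, i + 2})
    (i : ℕ) (hi : 2 ≤ i) : F i \ F (i - 1) = {i + 2} := by
  rw [hF, hF]
  ext x
  simp only [Finset.mem_sdiff, Finset.mem_insert, Finset.mem_singleton]
  omega

/-- For a path `v_1, …, v_m` (`m ≥ 3`), the facet ideal of the complex with ordered
facets `F_i = {v_i, v_{i+1}, v_{i+2}}`, `1 ≤ i ≤ m-2`, has linear residuals: for each
`i ≥ 2` every residual `m_{F_i}/gcd(m_{F_i}, m_{F_k})` (with support `F_i \ F_k`) is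
divisible by a residual which is a single variable; indeed the minimal residual is
`x_{v_{i+2}}`, since `F_i \ F_{i-1} = {v_{i+2}}`. -/
theorem path_complex_linear_residuals (m : ℕ) (hm : 3 ≤ m)
    (F : ℕ → Finset ℕ) (hF : ∀ i, F i = {i, i + 1, i + 2}) :
    ∀ i, 2 ≤ i → i ≤ m - 2 →
      (∀ k, 1 ≤ k → k < i →
        ∃ k', 1 ≤ k' ∧ k' < i ∧ (F i \ F k') ⊆ (F i \ F k) ∧ (F i \ F k').card = 1) ∧
      F i \ F (i - 1) = {i + 2} := by
  intro i hi _
  have hd := path_diff F hF i hi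
  constructor
  · intro k hk hki
    refine ⟨i - 1, by omega, by omega, ?_, by rw [hd]; simp⟩
    rw [hd]
    intro x hx
    simp only [Finset.mem_singleton] at hx
    subst hx
    rw [hF, hF]
    simp only [Finset.mem_sdiff, Finset.mem_insert, Finset.mem_singleton]
    exact ⟨Or.inr (Or.inr trivial), by omega⟩
  · exact hd
end
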